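/- For every integer N ≥ 1: 0 < H(η(N); −1) and H(η(N); −1) ≤ log(N+1)/log 2 (in particular 0 < H(η(N); −1)/log(N+1) ≤ 1/log 2). Moreover, for every real s < −1 and every integer N ≥ 1, |H(η(N); s)| ≤ ((2^{s+1} + 3)/(1 − 2^{s+1})) · N^{−(s+1)}. -/

import Mathlib

open Filter Topology

noncomputable section

namespace GreedyEnergy

/-- Decreasing list `n₁ > n₂ > ⋯ > n_p` of the binary exponents of `N`,
so that `N = 2^{n₁} + ⋯ + 2^{n_p}` with `n₁ > n₂ > ⋯ > n_p ≥ 0`. -/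
def binExps (N : ℕ) : List ℕ :=
  ((List.range (N + 1)).filter fun i => N.testBit i).reverse

/-- The number `p = τ_b(N)` of ones in the binary expansion of `N`. -/
def pbin (N : ℕ) : ℕ := (binExps N).length

/-- `η(N)` viewed as an infinite sequence (0-indexed): the entry of index `k`
is `θ_{k+1} = 2^{n_{k+1}}/N` for `k < p`, and `0` for `k ≥ p`. -/
def eta (N : ℕ) : ℕ → ℝ :=
  fun k => ((binExps N).map fun n => (2 : ℝ) ^ n / (N : ℝ)).getD k 0

/-- `H(θ; s)` for a finite vector of length `p` given (0-indexed) by `θ : ℕ → ℝ`: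
`H(θ;s) = Σ_{k=1}^p θ_k^{s+1} + 2(2^s − 1) Σ_{k=1}^{p−1} θ_k^s Σ_{j=k+1}^p θ_j`. -/
def Hvec (θ : ℕ → ℝ) (p : ℕ) (s : ℝ) : ℝ :=
  (∑ k ∈ Finset.range p, θ k ^ (s + 1)) +
    2 * ((2 : ℝ) ^ s - 1) *
      ∑ k ∈ Finset.range p, θ k ^ s * ∑ j ∈ Finset.Ico (k + 1) p, θ j

/-- `K(θ) = 2 log 2 + Σ_{k=1}^p θ_k² log(θ_k/4) + 2 Σ_{k=1}^{p−1} (Σ_{j=k+1}^p θ_j) θ_k log θ_k`. -/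
def Kvec (θ : ℕ → ℝ) (p : ℕ) : ℝ :=
  2 * Real.log 2 + (∑ k ∈ Finset.range p, θ k ^ 2 * Real.log (θ k / 4)) +
    2 * ∑ k ∈ Finset.range p, (∑ j ∈ Finset.Ico (k + 1) p, θ j) * (θ k * Real.log (θ k))

/-- `R(θ) = −(2 log 2) Σ_{k=1}^p (k−1) θ_k − Σ_{k=1}^p θ_k log θ_k` (0-indexed: `k−1 ↦ k`). -/
def Rvec (θ : ℕ → ℝ) (p : ℕ) : ℝ :=
  -(2 * Real.log 2) * (∑ k ∈ Finset.range p, (k : ℝ) * θ k) -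
    ∑ k ∈ Finset.range p, θ k * Real.log (θ k)

/-- `G(θ; s) = Σ_{k=1}^p θ_k^s`. -/
def Gvec (θ : ℕ → ℝ) (p : ℕ) (s : ℝ) : ℝ := ∑ k ∈ Finset.range p, θ k ^ s

/-- `Λ(θ) = Σ_{k=1}^p θ_k log θ_k`. -/
def Λvec (θ : ℕ → ℝ) (p : ℕ) : ℝ := ∑ k ∈ Finset.range p, θ k * Real.log (θ k)

/-- `H(η(N); s)`. -/
def Heta (N : ℕ) (s : ℝ) : ℝ := Hvec (eta N) (pbin N) s

/-- `K(η(N))`. -/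
def Keta (N : ℕ) : ℝ := Kvec (eta N) (pbin N)

/-- `R(η(N))`. -/
def Reta (N : ℕ) : ℝ := Rvec (eta N) (pbin N)

/-- `G(η(N); s)`. -/
def Geta (N : ℕ) (s : ℝ) : ℝ := Gvec (eta N) (pbin N) s

/-- `Λ(η(N))`. -/
def Λeta (N : ℕ) : ℝ := Λvec (eta N) (pbin N)

/-- The set `𝒮` of infinite sequences `ϑ` for which there is a strictly increasing
sequence of positive integers `N_m` with `ϑ_j = lim_m (η(N_m))_j` for every `j`. -/
def Sset : Set (ℕ → ℝ) :=
  {ϑ | ∃ Nm : ℕ → ℕ, StrictMono Nm ∧ (∀ m, 1 ≤ Nm m) ∧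
        ∀ j, Tendsto (fun m => eta (Nm m) j) atTop (𝓝 (ϑ j))}

/-- `H(ϑ; s)` for an infinite sequence `ϑ` (0-indexed). The conventions
`ϑ_n log ϑ_n = 0` and `ϑ_n^s ϑ_j = 0` when `ϑ_n = 0` hold automatically,
since `Real.log 0 = 0` and `(0:ℝ) ^ s = 0` for `s ≠ 0` (and the factor
`2^s − 1` vanishes when `s = 0`). -/
def Hinf (ϑ : ℕ → ℝ) (s : ℝ) : ℝ :=
  (∑' n : ℕ, ϑ n ^ (s + 1)) +
    2 * ((2 : ℝ) ^ s - 1) * ∑' n : ℕ, ϑ n ^ s * ∑' j : ℕ, ϑ (n + 1 + j)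

/-- `K(ϑ)` for an infinite sequence `ϑ`. -/
def Kinf (ϑ : ℕ → ℝ) : ℝ :=
  2 * Real.log 2 + (∑' n : ℕ, ϑ n ^ 2 * Real.log (ϑ n / 4)) +
    2 * ∑' n : ℕ, (∑' j : ℕ, ϑ (n + 1 + j)) * (ϑ n * Real.log (ϑ n))

/-- `R(ϑ)` for an infinite sequence `ϑ` (0-indexed: `n−1 ↦ n`). -/
def Rinf (ϑ : ℕ → ℝ) : ℝ :=
  -(2 * Real.log 2) * (∑' n : ℕ, (n : ℝ) * ϑ n) - ∑' n : ℕ, ϑ n * Real.log (ϑ n)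

/-- The set of limit points of a real sequence: values of convergent subsequences. -/
def limitPoints (x : ℕ → ℝ) : Set ℝ :=
  {L | ∃ φ : ℕ → ℕ, StrictMono φ ∧ Tendsto (fun m => x (φ m)) atTop (𝓝 L)}

/-- The Riesz `s`-kernel: `k_s(z,w) = |z−w|^{−s}` for `s ≠ 0`, `k_0(z,w) = −log|z−w|`. -/
def kernel (s : ℝ) (z w : ℂ) : ℝ :=
  if s = 0 then -Real.log (‖z - w‖) else ‖z - w‖ ^ (-s)

/-- The Riesz `s`-energy `E_s(a_0, …, a_{N−1}) = Σ_{i ≠ j} k_s(a_i, a_j)`. -/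
def energy (s : ℝ) (a : ℕ → ℂ) (N : ℕ) : ℝ :=
  ∑ i ∈ Finset.range N, ∑ j ∈ Finset.range N,
    if i ≠ j then kernel s (a i) (a j) else 0

/-- The potential `U_{N,s}(z) = Σ_{ℓ=0}^{N−1} k_s(z, a_ℓ)`. -/
def pot (s : ℝ) (a : ℕ → ℂ) (N : ℕ) (z : ℂ) : ℝ :=
  ∑ l ∈ Finset.range N, kernel s z (a l)

/-- A greedy `s`-energy sequence on the unit circle: all points lie on `S¹`, and for
every `N ≥ 1` the point `a_N` minimizes (if `s ≥ 0`) resp. maximizes (if `s < 0`)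
the potential `U_{N,s}` over `S¹`. -/
def IsGreedy (s : ℝ) (a : ℕ → ℂ) : Prop :=
  (∀ n, ‖a n‖ = 1) ∧
    ∀ N, 1 ≤ N →
      ((0 ≤ s → ∀ z : ℂ, ‖z‖ = 1 → pot s a N (a N) ≤ pot s a N z) ∧
        (s < 0 → ∀ z : ℂ, ‖z‖ = 1 → pot s a N z ≤ pot s a N (a N)))

/-- `I_s(σ) = 2^{−s} Γ((1−s)/2) / (√π Γ(1 − s/2))`. -/
def Isigma (s : ℝ) : ℝ :=
  (2 : ℝ) ^ (-s) / Real.sqrt Real.pi * (Real.Gamma ((1 - s) / 2) / Real.Gamma (1 - s / 2))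

/-- The value `ζ(s)` of the Riemann zeta function at a real `s` (real part of the
analytically continued zeta function). -/
def zetaR (s : ℝ) : ℝ := (riemannZeta (s : ℂ)).re

/-!
For `θ_k = 2^{n_k}/N`, the tail `Σ_{j>k} θ_j` is strictly smaller than `θ_k`: the lower binary
digits of `N` add up to less than `2^{n_k}`. At `s = -1` this makes
`H = p - Σ_k (Σ_{j>k} θ_j)/θ_k` lie in `(0, p]`, and `2^p - 1 ≤ N` gives `p ≤ log₂(N+1)`.
For `s < -1` put `r = 2^{s+1} < 1`; the tail bound gives `|H| ≤ (3 - r) Σ_k θ_k^{s+1}`, and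
`θ_k^{s+1} = r^{n_k} N^{-(s+1)}` with distinct `n_k`, so the sum is at most `N^{-(s+1)}/(1 - r)`.
-/

lemma _root_.Finset.sum_range_card_le_sum {M : Type*} [AddCommMonoid M] [PartialOrder M]
    [IsOrderedAddMonoid M] {f : ℕ → M} (hf : Monotone f) (s : Finset ℕ) :
    ∑ i ∈ Finset.range s.card, f i ≤ ∑ i ∈ s, f i := by
  induction s using Finset.induction_on_max with
  | empty => simp
  | insert a t hlt ih =>
    have hat : a ∉ t := fun h => (hlt a h).false
    have hcard : t.card ≤ a := by
      have hsub : t ⊆ Finset.range a := fun x hx => Finset.mem_range.2 (hlt x hx)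
      simpa using Finset.card_le_card hsub
    rw [Finset.card_insert_of_notMem hat, Finset.sum_range_succ, Finset.sum_insert hat,
      add_comm (f a)]
    exact add_le_add ih (hf hcard)

lemma _root_.Finset.sum_pow_le_inv_one_sub {r : ℝ} (h₀ : 0 ≤ r) (h₁ : r < 1)
    (s : Finset ℕ) : ∑ i ∈ s, r ^ i ≤ (1 - r)⁻¹ :=
  tsum_geometric_of_lt_one h₀ h₁ ▸
    (summable_geometric_of_lt_one h₀ h₁).sum_le_tsum s fun i _ => pow_nonneg h₀ i

lemma mem_binExps {N i : ℕ} : i ∈ binExps N ↔ N.testBit i := by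
  simp only [binExps, List.mem_reverse, List.mem_filter, List.mem_range, and_iff_right_iff_imp]
  exact fun h => Nat.lt_succ_of_lt (Nat.lt_two_pow_self.trans_le (Nat.ge_two_pow_of_testBit h))

lemma binExps_pairwise_gt (N : ℕ) : (binExps N).Pairwise (· > ·) :=
  List.pairwise_reverse.2 (List.pairwise_lt_range.filter _)

-- `binExp N k` is the exponent `n_{k+1}` of the binary decomposition of `N`.
def binExp (N k : ℕ) : ℕ := (binExps N).getD k 0

lemma strictAntiOn_binExp (N : ℕ) : StrictAntiOn (binExp N) (Set.Iio (pbin N)) := by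
  intro i hi j hj hij
  rw [binExp, binExp, List.getD_eq_getElem _ _ hi, List.getD_eq_getElem _ _ hj]
  exact List.pairwise_iff_getElem.1 (binExps_pairwise_gt N) i j hi hj hij

lemma image_binExp (N : ℕ) :
    (Finset.range (pbin N)).image (binExp N) = N.bitIndices.toFinset := by
  ext i
  rw [List.mem_toFinset, Nat.mem_bitIndices, ← mem_binExps, List.mem_iff_getElem]
  simp only [Finset.mem_image, Finset.mem_range]
  constructor
  · rintro ⟨k, hk, rfl⟩
    exact ⟨k, hk, (List.getD_eq_getElem _ _ hk).symm⟩
  · rintro ⟨k, hk, rfl⟩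
    exact ⟨k, hk, List.getD_eq_getElem _ _ hk⟩

lemma sum_range_pbin_binExp {M : Type*} [AddCommMonoid M] (N : ℕ) (g : ℕ → M) :
    ∑ k ∈ Finset.range (pbin N), g (binExp N k) = ∑ i ∈ N.bitIndices.toFinset, g i := by
  rw [← image_binExp, Finset.sum_image]
  exact (strictAntiOn_binExp N).injOn.mono (by simp)

lemma sum_two_pow_binExp (N : ℕ) : ∑ k ∈ Finset.range (pbin N), 2 ^ binExp N k = N := by
  rw [sum_range_pbin_binExp, Finset.sum_toFinset_bitIndices_two_pow]

lemma two_pow_binExp_le {N k : ℕ} (hk : k < pbin N) : 2 ^ binExp N k ≤ N :=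
  (sum_two_pow_binExp N).le.trans' <|
    Finset.single_le_sum (f := fun k => 2 ^ binExp N k) (fun _ _ => Nat.zero_le _)
      (Finset.mem_range.2 hk)

lemma pbin_pos {N : ℕ} (hN : 1 ≤ N) : 0 < pbin N := by
  by_contra h
  have hsum := sum_two_pow_binExp N
  simp only [Nat.eq_zero_of_not_pos h, Finset.range_zero, Finset.sum_empty] at hsum
  omega

lemma two_pow_pbin_le (N : ℕ) : 2 ^ pbin N ≤ N + 1 := by
  have hcard : N.bitIndices.toFinset.card = pbin N := by
    rw [← image_binExp, Finset.card_image_of_injOn, Finset.card_range]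
    exact (strictAntiOn_binExp N).injOn.mono (by simp)
  have hsum := Finset.sum_range_card_le_sum (f := (2 ^ ·)) (pow_right_mono₀ one_le_two)
    N.bitIndices.toFinset
  rw [hcard, Finset.sum_toFinset_bitIndices_two_pow, Nat.geomSum_eq le_rfl] at hsum
  omega

lemma sum_Ico_two_pow_binExp_lt {N k : ℕ} (hk : k < pbin N) :
    ∑ j ∈ Finset.Ico (k + 1) (pbin N), 2 ^ binExp N j < 2 ^ binExp N k := by
  have hinj : Set.InjOn (binExp N) (Finset.Ico (k + 1) (pbin N)) :=
    (strictAntiOn_binExp N).injOn.mono (by intro j; simp)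
  rw [← Finset.sum_image hinj]
  refine Nat.geomSum_lt le_rfl ?_
  simp only [Finset.mem_image, Finset.mem_Ico]
  rintro _ ⟨j, ⟨hkj, hj⟩, rfl⟩
  exact strictAntiOn_binExp N hk hj (by omega)

lemma eta_of_lt {N k : ℕ} (hk : k < pbin N) : eta N k = 2 ^ binExp N k / N := by
  rw [eta, binExp, List.getD_eq_getElem _ _ (by simpa [pbin] using hk), List.getElem_map,
    ← List.getD_eq_getElem _ 0]

lemma eta_pos {N k : ℕ} (hk : k < pbin N) : 0 < eta N k := by
  have hN : (0 : ℝ) < N := by exact_mod_cast Nat.one_le_two_pow.trans (two_pow_binExp_le hk)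
  rw [eta_of_lt hk]
  positivity

lemma sum_Ico_eta_lt {N k : ℕ} (hk : k < pbin N) :
    ∑ j ∈ Finset.Ico (k + 1) (pbin N), eta N j < eta N k := by
  have hN : (0 : ℝ) < N := by exact_mod_cast Nat.one_le_two_pow.trans (two_pow_binExp_le hk)
  have htail :
      (∑ j ∈ Finset.Ico (k + 1) (pbin N), (2 : ℝ) ^ binExp N j) < 2 ^ binExp N k := by
    exact_mod_cast sum_Ico_two_pow_binExp_lt hk
  rw [Finset.sum_congr rfl fun j hj => eta_of_lt (Finset.mem_Ico.1 hj).2, ← Finset.sum_div,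
    eta_of_lt hk]
  gcongr

lemma eta_rpow {N k : ℕ} (hk : k < pbin N) (t : ℝ) :
    eta N k ^ t = ((2 : ℝ) ^ t) ^ binExp N k * (N : ℝ) ^ (-t) := by
  rw [eta_of_lt hk, Real.div_rpow (by positivity) (Nat.cast_nonneg _),
    Real.rpow_neg (Nat.cast_nonneg _),
    ← Real.rpow_natCast, ← Real.rpow_natCast, ← Real.rpow_mul zero_le_two,
    ← Real.rpow_mul zero_le_two, mul_comm, div_eq_mul_inv]

lemma sum_eta_rpow_le {t : ℝ} (ht : t < 0) (N : ℕ) :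
    ∑ k ∈ Finset.range (pbin N), eta N k ^ t ≤
      (1 - (2 : ℝ) ^ t)⁻¹ * (N : ℝ) ^ (-t) := by
  rw [Finset.sum_congr rfl fun k hk => eta_rpow (Finset.mem_range.1 hk) t, ← Finset.sum_mul,
    sum_range_pbin_binExp N (fun i => ((2 : ℝ) ^ t) ^ i)]
  gcongr
  exact Finset.sum_pow_le_inv_one_sub (by positivity)
    (Real.rpow_lt_one_of_one_lt_of_neg one_lt_two ht) _

lemma Hvec_neg_one (θ : ℕ → ℝ) (p : ℕ) :
    Hvec θ p (-1) =
      p - ∑ k ∈ Finset.range p, (∑ j ∈ Finset.Ico (k + 1) p, θ j) / θ k := by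
  simp only [Hvec, neg_add_cancel, Real.rpow_zero, Real.rpow_neg_one, Finset.sum_const,
    Finset.card_range, nsmul_eq_mul, mul_one, div_eq_inv_mul]
  norm_num [sub_eq_add_neg]

lemma abs_Hvec_le {θ : ℕ → ℝ} {p : ℕ} {s : ℝ} (hs : s ≤ 0) (hθ : ∀ k < p, 0 < θ k)
    (htail : ∀ k < p, ∑ j ∈ Finset.Ico (k + 1) p, θ j ≤ θ k) :
    |Hvec θ p s| ≤ (3 - 2 ^ (s + 1)) * ∑ k ∈ Finset.range p, θ k ^ (s + 1) := by
  set A := ∑ k ∈ Finset.range p, θ k ^ (s + 1)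
  set B := ∑ k ∈ Finset.range p, θ k ^ s * ∑ j ∈ Finset.Ico (k + 1) p, θ j
  have hB₀ : 0 ≤ B := Finset.sum_nonneg fun k hk =>
    mul_nonneg (Real.rpow_nonneg (hθ k (Finset.mem_range.1 hk)).le _)
      (Finset.sum_nonneg fun j hj => (hθ j (Finset.mem_Ico.1 hj).2).le)
  have hBA : B ≤ A := Finset.sum_le_sum fun k hk => by
    have hk := Finset.mem_range.1 hk
    rw [Real.rpow_add_one (hθ k hk).ne']
    exact mul_le_mul_of_nonneg_left (htail k hk) (Real.rpow_nonneg (hθ k hk).le _)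
  have h2s : (2 : ℝ) ^ (s + 1) = 2 * 2 ^ s := by rw [Real.rpow_add_one two_ne_zero, mul_comm]
  have h2s₁ : (2 : ℝ) ^ s ≤ 1 := Real.rpow_le_one_of_one_le_of_nonpos one_le_two hs
  have h2s₀ : (0 : ℝ) < 2 ^ s := by positivity
  have hH : Hvec θ p s = A + 2 * (2 ^ s - 1) * B := rfl
  rw [hH, abs_le, h2s]
  constructor <;> nlinarith

lemma Heta_neg_one_pos {N : ℕ} (hN : 1 ≤ N) : 0 < Heta N (-1) := by
  rw [Heta, Hvec_neg_one, sub_pos]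
  calc ∑ k ∈ Finset.range (pbin N), (∑ j ∈ Finset.Ico (k + 1) (pbin N), eta N j) / eta N k
      < ∑ _k ∈ Finset.range (pbin N), (1 : ℝ) :=
        Finset.sum_lt_sum_of_nonempty (Finset.nonempty_range_iff.2 (pbin_pos hN).ne')
          fun k hk => (div_lt_one (eta_pos (Finset.mem_range.1 hk))).2
            (sum_Ico_eta_lt (Finset.mem_range.1 hk))
    _ = pbin N := by simp

lemma Heta_neg_one_le_pbin (N : ℕ) : Heta N (-1) ≤ pbin N := by
  rw [Heta, Hvec_neg_one, sub_le_self_iff]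
  refine Finset.sum_nonneg fun k hk => div_nonneg (Finset.sum_nonneg fun j hj => ?_) ?_
  · exact (eta_pos (Finset.mem_Ico.1 hj).2).le
  · exact (eta_pos (Finset.mem_range.1 hk)).le

lemma pbin_le_log_div_log_two (N : ℕ) : (pbin N : ℝ) ≤ Real.log (N + 1) / Real.log 2 := by
  rw [le_div_iff₀ (Real.log_pos one_lt_two), ← Real.log_pow]
  exact Real.log_le_log (by positivity) (by exact_mod_cast two_pow_pbin_le N)

theorem stmt9 :
    (∀ N : ℕ, 1 ≤ N →
      0 < Heta N (-1) ∧ Heta N (-1) ≤ Real.log (N + 1) / Real.log 2 ∧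
      0 < Heta N (-1) / Real.log (N + 1) ∧
      Heta N (-1) / Real.log (N + 1) ≤ 1 / Real.log 2) ∧
    (∀ s : ℝ, s < -1 → ∀ N : ℕ, 1 ≤ N →
      |Heta N s| ≤ ((2 : ℝ) ^ (s + 1) + 3) / (1 - (2 : ℝ) ^ (s + 1)) *
        (N : ℝ) ^ (-(s + 1))) := by
  refine ⟨fun N hN => ?_, fun s hs N _ => ?_⟩
  · have hpos := Heta_neg_one_pos hN
    have hle := (Heta_neg_one_le_pbin N).trans (pbin_le_log_div_log_two N)
    have hlog : 0 < Real.log (N + 1) := Real.log_pos (by norm_cast; omega)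
    refine ⟨hpos, hle, div_pos hpos hlog, ?_⟩
    calc Heta N (-1) / Real.log (N + 1)
        ≤ Real.log (N + 1) / Real.log 2 / Real.log (N + 1) := by gcongr
      _ = 1 / Real.log 2 := by field_simp
  · have ht : s + 1 < 0 := by linarith
    have hr₁ : (2 : ℝ) ^ (s + 1) < 1 := Real.rpow_lt_one_of_one_lt_of_neg one_lt_two ht
    calc |Heta N s| ≤ (3 - 2 ^ (s + 1)) * ∑ k ∈ Finset.range (pbin N), eta N k ^ (s + 1) :=
          abs_Hvec_le (by linarith) (fun _ hk => eta_pos hk) fun _ hk => (sum_Ico_eta_lt hk).le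
      _ ≤ (3 - 2 ^ (s + 1)) * ((1 - 2 ^ (s + 1))⁻¹ * (N : ℝ) ^ (-(s + 1))) := by
          gcongr
          · linarith
          · exact sum_eta_rpow_le ht N
      _ ≤ ((2 : ℝ) ^ (s + 1) + 3) / (1 - (2 : ℝ) ^ (s + 1)) * (N : ℝ) ^ (-(s + 1)) := by
          rw [div_eq_mul_inv, ← mul_assoc]
          have hr₀ : (0 : ℝ) < 2 ^ (s + 1) := by positivity
          gcongr
          linarith

end GreedyEnergy
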